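/- (Proposition 1) The product * defined by formula (2) is associative: for any multi-degrees l, l', l'' ∈ ℕ^h, any f ∈ F_l, g ∈ F_{l'}, k ∈ F_{l''} (symmetric in each group of x-variables), and any point (x; u) such that θ(x_{α,i} − x_{β,j}) ≠ 0 for every two distinct x-variable slots (α,i) ≠ (β,j), one has ((f*g)*k)(x;u) = (f*(g*k))(x;u). -/

import Mathlib

open Complex

/-- The theta function `θ(z) = Σ_{α∈ℤ} (−1)^α e^{2πi(αz + α(α−1)η/2)}`. -/
noncomputable def theta (η : ℂ) (z : ℂ) : ℂ :=
  ∑' n : ℤ, (-1) ^ n * Complex.exp (2 * (Real.pi : ℂ) * I * (n * z + n * (n - 1) / 2 * η))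

/-- The space of functions `f(x_{1,1},…,x_{l_h,h}; u_1,…,u_h)` of `l₁+⋯+l_h` variables
`x_{α,i}` (grouped into `h` groups of sizes `l i`) and `h` variables `u_i`. -/
def FF (h : ℕ) (l : Fin h → ℕ) : Type :=
  (∀ i : Fin h, Fin (l i) → ℂ) → (Fin h → ℂ) → ℂ

/-- `f ∈ F_l` is symmetric in each group of variables `{x_{1,i},…,x_{l_i,i}}`. -/
def IsSymFF {h : ℕ} {l : Fin h → ℕ} (f : FF h l) : Prop :=
  ∀ (σ : ∀ i : Fin h, Equiv.Perm (Fin (l i))) (x : ∀ i : Fin h, Fin (l i) → ℂ)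
    (u : Fin h → ℂ), f (fun i => x i ∘ σ i) u = f x u

/-- The product `f*g` of formula (2), where `d i j = (δ_i, δ_j)` are the scalar products. -/
noncomputable def starMul {h : ℕ} (η τ : ℂ) (d : Fin h → Fin h → ℂ)
    {l l' : Fin h → ℕ} (f : FF h l) (g : FF h l') : FF h (fun i => l i + l' i) :=
  fun x u =>
    (∏ i : Fin h, ((l i).factorial * (l' i).factorial : ℂ))⁻¹ *
    ∑ σ : ∀ i : Fin h, Equiv.Perm (Fin (l i + l' i)),
      f (fun i a => x i (σ i (Fin.castAdd (l' i) a))) u *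
      g (fun i b => x i (σ i (Fin.natAdd (l i) b)))
        (fun i => u i - 2 * (∑ j : Fin h, (l j : ℂ) * d j i) * τ) *
      ∏ i : Fin h, ∏ j : Fin h, ∏ a : Fin (l i), ∏ b : Fin (l' j),
        (theta η (x i (σ i (Fin.castAdd (l' i) a)) - x j (σ j (Fin.natAdd (l j) b)) - d i j * τ) /
         theta η (x i (σ i (Fin.castAdd (l' i) a)) - x j (σ j (Fin.natAdd (l j) b))))


open Equiv

/-- Extend a permutation of `Fin m` to `Fin (m + n)`, acting as identity on the last block. -/
def permL {m n : ℕ} (ρ : Equiv.Perm (Fin m)) : Equiv.Perm (Fin (m + n)) :=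
  finSumFinEquiv.permCongr (ρ.sumCongr (Equiv.refl (Fin n)))

/-- Extend a permutation of `Fin n` to `Fin (m + n)`, acting as identity on the first block. -/
def permR {m n : ℕ} (ρ : Equiv.Perm (Fin n)) : Equiv.Perm (Fin (m + n)) :=
  finSumFinEquiv.permCongr ((Equiv.refl (Fin m)).sumCongr ρ)

@[simp] lemma permL_castAdd {m n : ℕ} (ρ : Equiv.Perm (Fin m)) (a : Fin m) :
    permL (n := n) ρ (Fin.castAdd n a) = Fin.castAdd n (ρ a) := by
  simp [permL, Equiv.permCongr_apply]

@[simp] lemma permL_natAdd {m n : ℕ} (ρ : Equiv.Perm (Fin m)) (b : Fin n) :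
    permL (n := n) ρ (Fin.natAdd m b) = Fin.natAdd m b := by
  simp [permL, Equiv.permCongr_apply]

@[simp] lemma permR_castAdd {m n : ℕ} (ρ : Equiv.Perm (Fin n)) (a : Fin m) :
    permR (m := m) ρ (Fin.castAdd n a) = Fin.castAdd n a := by
  simp [permR, Equiv.permCongr_apply]

@[simp] lemma permR_natAdd {m n : ℕ} (ρ : Equiv.Perm (Fin n)) (b : Fin n) :
    permR (m := m) ρ (Fin.natAdd m b) = Fin.natAdd m (ρ b) := by
  simp [permR, Equiv.permCongr_apply]

@[simp] lemma castsymm1 {a b c : ℕ} (hh : a + b + c = a + (b + c)) (i : Fin a) :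
    Fin.cast hh (Fin.castAdd c (Fin.castAdd b i)) = Fin.castAdd (b + c) i := rfl

@[simp] lemma castsymm2 {a b c : ℕ} (hh : a + b + c = a + (b + c)) (i : Fin b) :
    Fin.cast hh (Fin.castAdd c (Fin.natAdd a i)) = Fin.natAdd a (Fin.castAdd c i) := rfl

@[simp] lemma castsymm3 {a b c : ℕ} (hh : a + b + c = a + (b + c)) (i : Fin c) :
    Fin.cast hh (Fin.natAdd (a + b) i) = Fin.natAdd a (Fin.natAdd b i) := by
  apply Fin.ext; simp [Nat.add_assoc]

/-- Split (and unpermute) a fourfold product over `i j a b` in its third index. -/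
lemma prod_split3 {h : ℕ} (m m' m'' : Fin h → ℕ) (ρ : ∀ i, Equiv.Perm (Fin (m' i + m'' i)))
    (G : ∀ (i j : Fin h), Fin (m' i + m'' i) → Fin (m j) → ℂ) :
    (∏ i, ∏ j, ∏ a : Fin (m' i + m'' i), ∏ b : Fin (m j), G i j a b) =
    (∏ i, ∏ j, ∏ a : Fin (m' i), ∏ b : Fin (m j), G i j (ρ i (Fin.castAdd (m'' i) a)) b) *
    (∏ i, ∏ j, ∏ a : Fin (m'' i), ∏ b : Fin (m j), G i j (ρ i (Fin.natAdd (m' i) a)) b) := by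
  rw [← Finset.prod_mul_distrib]
  refine Finset.prod_congr rfl fun i _ => ?_
  rw [← Finset.prod_mul_distrib]
  refine Finset.prod_congr rfl fun j _ => ?_
  calc (∏ a : Fin (m' i + m'' i), ∏ b : Fin (m j), G i j a b)
      = ∏ a : Fin (m' i + m'' i), ∏ b : Fin (m j), G i j (ρ i a) b :=
        (Equiv.prod_comp (ρ i) fun a => ∏ b : Fin (m j), G i j a b).symm
    _ = _ := Fin.prod_univ_add fun a => ∏ b : Fin (m j), G i j (ρ i a) b

/-- Split (and unpermute) a fourfold product over `i j a b` in its fourth index. -/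
lemma prod_split4 {h : ℕ} (m m' m'' : Fin h → ℕ) (ρ : ∀ j, Equiv.Perm (Fin (m' j + m'' j)))
    (G : ∀ (i j : Fin h), Fin (m i) → Fin (m' j + m'' j) → ℂ) :
    (∏ i, ∏ j, ∏ a : Fin (m i), ∏ b : Fin (m' j + m'' j), G i j a b) =
    (∏ i, ∏ j, ∏ a : Fin (m i), ∏ b : Fin (m' j), G i j a (ρ j (Fin.castAdd (m'' j) b))) *
    (∏ i, ∏ j, ∏ a : Fin (m i), ∏ b : Fin (m'' j), G i j a (ρ j (Fin.natAdd (m' j) b))) := by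
  rw [← Finset.prod_mul_distrib]
  refine Finset.prod_congr rfl fun i _ => ?_
  rw [← Finset.prod_mul_distrib]
  refine Finset.prod_congr rfl fun j _ => ?_
  rw [← Finset.prod_mul_distrib]
  refine Finset.prod_congr rfl fun a _ => ?_
  calc (∏ b : Fin (m' j + m'' j), G i j a b)
      = ∏ b : Fin (m' j + m'' j), G i j a (ρ j b) :=
        (Equiv.prod_comp (ρ j) fun b => G i j a b).symm
    _ = _ := Fin.prod_univ_add fun b => G i j a (ρ j b)

/-- The common normal form summand for the triple product. -/
noncomputable def Phi {h : ℕ} (η τ : ℂ) (d : Fin h → Fin h → ℂ) {l l' l'' : Fin h → ℕ}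
    (f : FF h l) (g : FF h l') (k : FF h l'')
    (x : ∀ i : Fin h, Fin (l i + l' i + l'' i) → ℂ) (u : Fin h → ℂ)
    (σ : ∀ i : Fin h, Equiv.Perm (Fin (l i + l' i + l'' i))) : ℂ :=
  f (fun i a => x i (σ i (Fin.castAdd (l'' i) (Fin.castAdd (l' i) a)))) u *
  g (fun i b => x i (σ i (Fin.castAdd (l'' i) (Fin.natAdd (l i) b))))
    (fun i => u i - 2 * (∑ j : Fin h, (l j : ℂ) * d j i) * τ) *
  k (fun i c => x i (σ i (Fin.natAdd (l i + l' i) c)))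
    (fun i => u i - 2 * (∑ j : Fin h, ((l j + l' j : ℕ) : ℂ) * d j i) * τ) *
  (∏ i : Fin h, ∏ j : Fin h, ∏ a : Fin (l i), ∏ b : Fin (l' j),
    (theta η (x i (σ i (Fin.castAdd (l'' i) (Fin.castAdd (l' i) a))) -
        x j (σ j (Fin.castAdd (l'' j) (Fin.natAdd (l j) b))) - d i j * τ) /
     theta η (x i (σ i (Fin.castAdd (l'' i) (Fin.castAdd (l' i) a))) -
        x j (σ j (Fin.castAdd (l'' j) (Fin.natAdd (l j) b)))))) *
  (∏ i : Fin h, ∏ j : Fin h, ∏ a : Fin (l i), ∏ c : Fin (l'' j),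
    (theta η (x i (σ i (Fin.castAdd (l'' i) (Fin.castAdd (l' i) a))) -
        x j (σ j (Fin.natAdd (l j + l' j) c)) - d i j * τ) /
     theta η (x i (σ i (Fin.castAdd (l'' i) (Fin.castAdd (l' i) a))) -
        x j (σ j (Fin.natAdd (l j + l' j) c))))) *
  (∏ i : Fin h, ∏ j : Fin h, ∏ b : Fin (l' i), ∏ c : Fin (l'' j),
    (theta η (x i (σ i (Fin.castAdd (l'' i) (Fin.natAdd (l i) b))) -
        x j (σ j (Fin.natAdd (l j + l' j) c)) - d i j * τ) /
     theta η (x i (σ i (Fin.castAdd (l'' i) (Fin.natAdd (l i) b))) -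
        x j (σ j (Fin.natAdd (l j + l' j) c)))))

set_option maxHeartbeats 1000000 in
lemma lhs_eq {h : ℕ} (η τ : ℂ) (d : Fin h → Fin h → ℂ) {l l' l'' : Fin h → ℕ}
    (f : FF h l) (g : FF h l') (k : FF h l'')
    (x : ∀ i : Fin h, Fin (l i + l' i + l'' i) → ℂ) (u : Fin h → ℂ) :
    starMul η τ d (starMul η τ d f g) k x u =
      (∏ i : Fin h, ((l i).factorial * (l' i).factorial * (l'' i).factorial : ℂ))⁻¹ *
        ∑ σ : ∀ i : Fin h, Equiv.Perm (Fin (l i + l' i + l'' i)), Phi η τ d f g k x u σ := by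
  have key : ∀ σ : ∀ i : Fin h, Equiv.Perm (Fin (l i + l' i + l'' i)),
      ∀ ρ : ∀ i : Fin h, Equiv.Perm (Fin (l i + l' i)),
      f (fun i a => x i (σ i (Fin.castAdd (l'' i) (ρ i (Fin.castAdd (l' i) a))))) u *
      g (fun i b => x i (σ i (Fin.castAdd (l'' i) (ρ i (Fin.natAdd (l i) b)))))
        (fun i => u i - 2 * (∑ j : Fin h, (l j : ℂ) * d j i) * τ) *
      (∏ i : Fin h, ∏ j : Fin h, ∏ a : Fin (l i), ∏ b : Fin (l' j),
        (theta η (x i (σ i (Fin.castAdd (l'' i) (ρ i (Fin.castAdd (l' i) a)))) -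
            x j (σ j (Fin.castAdd (l'' j) (ρ j (Fin.natAdd (l j) b)))) - d i j * τ) /
         theta η (x i (σ i (Fin.castAdd (l'' i) (ρ i (Fin.castAdd (l' i) a)))) -
            x j (σ j (Fin.castAdd (l'' j) (ρ j (Fin.natAdd (l j) b))))))) *
      (k (fun i c => x i (σ i (Fin.natAdd (l i + l' i) c)))
        (fun i => u i - 2 * (∑ j : Fin h, ((l j + l' j : ℕ) : ℂ) * d j i) * τ) *
       ∏ i : Fin h, ∏ j : Fin h, ∏ a : Fin (l i + l' i), ∏ c : Fin (l'' j),
        (theta η (x i (σ i (Fin.castAdd (l'' i) a)) -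
            x j (σ j (Fin.natAdd (l j + l' j) c)) - d i j * τ) /
         theta η (x i (σ i (Fin.castAdd (l'' i) a)) -
            x j (σ j (Fin.natAdd (l j + l' j) c)))))
      = Phi η τ d f g k x u (fun i => σ i * permL (ρ i)) := by
    intro σ ρ
    rw [prod_split3 (fun j => l'' j) l l' ρ (fun i j a c =>
      (theta η (x i (σ i (Fin.castAdd (l'' i) a)) -
          x j (σ j (Fin.natAdd (l j + l' j) c)) - d i j * τ) /
       theta η (x i (σ i (Fin.castAdd (l'' i) a)) -
          x j (σ j (Fin.natAdd (l j + l' j) c)))))]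
    simp only [Phi, Equiv.Perm.mul_apply, permL_castAdd, permL_natAdd]
    ring
  calc starMul η τ d (starMul η τ d f g) k x u
      = (∏ i : Fin h, (((l i + l' i).factorial : ℂ) * ((l'' i).factorial : ℂ)))⁻¹ *
          ∑ σ : ∀ i : Fin h, Equiv.Perm (Fin (l i + l' i + l'' i)),
            ((∏ i : Fin h, (((l i).factorial : ℂ) * ((l' i).factorial : ℂ)))⁻¹ *
              ∑ ρ : ∀ i : Fin h, Equiv.Perm (Fin (l i + l' i)),
                Phi η τ d f g k x u (fun i => σ i * permL (ρ i))) := by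
        simp only [starMul]
        congr 1
        refine Finset.sum_congr rfl fun σ _ => ?_
        rw [mul_assoc, mul_assoc, Finset.sum_mul]
        congr 1
        refine Finset.sum_congr rfl fun ρ _ => key σ ρ
    _ = (∏ i : Fin h, (((l i + l' i).factorial : ℂ) * ((l'' i).factorial : ℂ)))⁻¹ *
          ((∏ i : Fin h, (((l i).factorial : ℂ) * ((l' i).factorial : ℂ)))⁻¹ *
            ∑ ρ : ∀ i : Fin h, Equiv.Perm (Fin (l i + l' i)),
              ∑ σ : ∀ i : Fin h, Equiv.Perm (Fin (l i + l' i + l'' i)),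
                Phi η τ d f g k x u (fun i => σ i * permL (ρ i))) := by
        rw [← Finset.mul_sum, Finset.sum_comm]
    _ = (∏ i : Fin h, (((l i + l' i).factorial : ℂ) * ((l'' i).factorial : ℂ)))⁻¹ *
          ((∏ i : Fin h, (((l i).factorial : ℂ) * ((l' i).factorial : ℂ)))⁻¹ *
            ∑ ρ : ∀ i : Fin h, Equiv.Perm (Fin (l i + l' i)),
              ∑ σ : ∀ i : Fin h, Equiv.Perm (Fin (l i + l' i + l'' i)),
                Phi η τ d f g k x u σ) := by
        congr 1; congr 1
        refine Finset.sum_congr rfl fun ρ _ => ?_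
        exact Fintype.sum_equiv
          (Equiv.piCongrRight fun i => Equiv.mulRight (permL (ρ i)))
          (fun σ => Phi η τ d f g k x u (fun i => σ i * permL (ρ i)))
          (fun σ => Phi η τ d f g k x u σ) (fun σ => rfl)
    _ = (∏ i : Fin h, (((l i + l' i).factorial : ℂ) * ((l'' i).factorial : ℂ)))⁻¹ *
          ((∏ i : Fin h, (((l i).factorial : ℂ) * ((l' i).factorial : ℂ)))⁻¹ *
            ((∏ i : Fin h, ((l i + l' i).factorial : ℂ)) *
              ∑ σ : ∀ i : Fin h, Equiv.Perm (Fin (l i + l' i + l'' i)),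
                Phi η τ d f g k x u σ)) := by
        rw [Finset.sum_const, Finset.card_univ, nsmul_eq_mul]
        congr 3
        simp [Fintype.card_pi, Fintype.card_perm, Fintype.card_fin]
    _ = (∏ i : Fin h, ((l i).factorial * (l' i).factorial * (l'' i).factorial : ℂ))⁻¹ *
          ∑ σ : ∀ i : Fin h, Equiv.Perm (Fin (l i + l' i + l'' i)),
            Phi η τ d f g k x u σ := by
        have h1 : (∏ i : Fin h, (((l i + l' i).factorial : ℂ) * ((l'' i).factorial : ℂ))) ≠ 0 :=
          Finset.prod_ne_zero_iff.mpr fun i _ => mul_ne_zero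
            (Nat.cast_ne_zero.2 (l i + l' i).factorial_ne_zero)
            (Nat.cast_ne_zero.2 (l'' i).factorial_ne_zero)
        have h2 : (∏ i : Fin h, (((l i).factorial : ℂ) * ((l' i).factorial : ℂ))) ≠ 0 :=
          Finset.prod_ne_zero_iff.mpr fun i _ => mul_ne_zero
            (Nat.cast_ne_zero.2 (l i).factorial_ne_zero)
            (Nat.cast_ne_zero.2 (l' i).factorial_ne_zero)
        have h3 : (∏ i : Fin h, ((l i).factorial * (l' i).factorial * (l'' i).factorial : ℂ)) ≠ 0 :=
          Finset.prod_ne_zero_iff.mpr fun i _ => mul_ne_zero (mul_ne_zero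
            (Nat.cast_ne_zero.2 (l i).factorial_ne_zero)
            (Nat.cast_ne_zero.2 (l' i).factorial_ne_zero))
            (Nat.cast_ne_zero.2 (l'' i).factorial_ne_zero)
        have hkey : (∏ i : Fin h, ((l i).factorial * (l' i).factorial * (l'' i).factorial : ℂ)) *
            (∏ i : Fin h, ((l i + l' i).factorial : ℂ)) =
            (∏ i : Fin h, (((l i + l' i).factorial : ℂ) * ((l'' i).factorial : ℂ))) *
            (∏ i : Fin h, (((l i).factorial : ℂ) * ((l' i).factorial : ℂ))) := by
          rw [← Finset.prod_mul_distrib, ← Finset.prod_mul_distrib]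
          exact Finset.prod_congr rfl fun i _ => by ring
        rw [← mul_assoc, ← mul_assoc]
        congr 1
        field_simp
        linear_combination hkey


lemma aux_rearr {α : Type*} [Fintype α] (F T c : ℂ) (B P : α → ℂ)
    (hp : ∀ ρ : α, B ρ * (F * T) = P ρ) :
    F * (c * ∑ ρ : α, B ρ) * T = c * ∑ ρ : α, P ρ := by
  calc F * (c * ∑ ρ : α, B ρ) * T = c * ((∑ ρ : α, B ρ) * (F * T)) := by ring
    _ = c * ∑ ρ : α, B ρ * (F * T) := by rw [Finset.sum_mul]
    _ = c * ∑ ρ : α, P ρ := by rw [Finset.sum_congr rfl fun ρ _ => hp ρ]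

lemma rhs_eq {h : ℕ} (η τ : ℂ) (d : Fin h → Fin h → ℂ) {l l' l'' : Fin h → ℕ}
    (f : FF h l) (g : FF h l') (k : FF h l'')
    (x : ∀ i : Fin h, Fin (l i + l' i + l'' i) → ℂ) (u : Fin h → ℂ) :
    starMul η τ d f (starMul η τ d g k)
      (fun i => x i ∘ Fin.cast (Nat.add_assoc (l i) (l' i) (l'' i)).symm) u =
      (∏ i : Fin h, ((l i).factorial * (l' i).factorial * (l'' i).factorial : ℂ))⁻¹ *
        ∑ σ : ∀ i : Fin h, Equiv.Perm (Fin (l i + l' i + l'' i)), Phi η τ d f g k x u σ := by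
  have hu : (fun i => u i - 2 * (∑ j : Fin h, (l j : ℂ) * d j i) * τ -
        2 * (∑ j : Fin h, (l' j : ℂ) * d j i) * τ) =
      (fun i => u i - 2 * (∑ j : Fin h, ((l j + l' j : ℕ) : ℂ) * d j i) * τ) := by
    funext i
    push_cast
    simp only [add_mul, Finset.sum_add_distrib]
    ring
  have key : ∀ σ : ∀ i : Fin h, Equiv.Perm (Fin (l i + (l' i + l'' i))),
      ∀ ρ : ∀ i : Fin h, Equiv.Perm (Fin (l' i + l'' i)),
      g (fun i b => x i (Fin.cast (Nat.add_assoc (l i) (l' i) (l'' i)).symm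
          (σ i (Fin.natAdd (l i) (ρ i (Fin.castAdd (l'' i) b))))))
        (fun i => u i - 2 * (∑ j : Fin h, (l j : ℂ) * d j i) * τ) *
      k (fun i c => x i (Fin.cast (Nat.add_assoc (l i) (l' i) (l'' i)).symm
          (σ i (Fin.natAdd (l i) (ρ i (Fin.natAdd (l' i) c))))))
        (fun i => u i - 2 * (∑ j : Fin h, (l j : ℂ) * d j i) * τ -
          2 * (∑ j : Fin h, (l' j : ℂ) * d j i) * τ) *
      (∏ i : Fin h, ∏ j : Fin h, ∏ b : Fin (l' i), ∏ c : Fin (l'' j),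
        (theta η (x i (Fin.cast (Nat.add_assoc (l i) (l' i) (l'' i)).symm
              (σ i (Fin.natAdd (l i) (ρ i (Fin.castAdd (l'' i) b))))) -
            x j (Fin.cast (Nat.add_assoc (l j) (l' j) (l'' j)).symm
              (σ j (Fin.natAdd (l j) (ρ j (Fin.natAdd (l' j) c))))) - d i j * τ) /
         theta η (x i (Fin.cast (Nat.add_assoc (l i) (l' i) (l'' i)).symm
              (σ i (Fin.natAdd (l i) (ρ i (Fin.castAdd (l'' i) b))))) -
            x j (Fin.cast (Nat.add_assoc (l j) (l' j) (l'' j)).symm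
              (σ j (Fin.natAdd (l j) (ρ j (Fin.natAdd (l' j) c)))))))) *
      (f (fun i a => x i (Fin.cast (Nat.add_assoc (l i) (l' i) (l'' i)).symm
          (σ i (Fin.castAdd (l' i + l'' i) a)))) u *
       ∏ i : Fin h, ∏ j : Fin h, ∏ a : Fin (l i), ∏ b : Fin (l' j + l'' j),
        (theta η (x i (Fin.cast (Nat.add_assoc (l i) (l' i) (l'' i)).symm
              (σ i (Fin.castAdd (l' i + l'' i) a))) -
            x j (Fin.cast (Nat.add_assoc (l j) (l' j) (l'' j)).symm
              (σ j (Fin.natAdd (l j) b))) - d i j * τ) /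
         theta η (x i (Fin.cast (Nat.add_assoc (l i) (l' i) (l'' i)).symm
              (σ i (Fin.castAdd (l' i + l'' i) a))) -
            x j (Fin.cast (Nat.add_assoc (l j) (l' j) (l'' j)).symm
              (σ j (Fin.natAdd (l j) b))))))
      = Phi η τ d f g k x u (fun i =>
          (finCongr (Nat.add_assoc (l i) (l' i) (l'' i)).symm).permCongr
            (σ i * permR (ρ i))) := by
    intro σ ρ
    rw [hu]
    rw [prod_split4 l l' l'' ρ (fun i j a b =>
      (theta η (x i (Fin.cast (Nat.add_assoc (l i) (l' i) (l'' i)).symm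
            (σ i (Fin.castAdd (l' i + l'' i) a))) -
          x j (Fin.cast (Nat.add_assoc (l j) (l' j) (l'' j)).symm
            (σ j (Fin.natAdd (l j) b))) - d i j * τ) /
       theta η (x i (Fin.cast (Nat.add_assoc (l i) (l' i) (l'' i)).symm
            (σ i (Fin.castAdd (l' i + l'' i) a))) -
          x j (Fin.cast (Nat.add_assoc (l j) (l' j) (l'' j)).symm
            (σ j (Fin.natAdd (l j) b))))))]
    simp only [Phi, Equiv.permCongr_apply, finCongr_symm, finCongr_apply,
      Equiv.Perm.mul_apply, castsymm1, castsymm2, castsymm3, permR_castAdd, permR_natAdd]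
    ring
  calc starMul η τ d f (starMul η τ d g k)
          (fun i => x i ∘ Fin.cast (Nat.add_assoc (l i) (l' i) (l'' i)).symm) u
      = (∏ i : Fin h, (((l i).factorial : ℂ) * ((l' i + l'' i).factorial : ℂ)))⁻¹ *
          ∑ σ : ∀ i : Fin h, Equiv.Perm (Fin (l i + (l' i + l'' i))),
            ((∏ i : Fin h, (((l' i).factorial : ℂ) * ((l'' i).factorial : ℂ)))⁻¹ *
              ∑ ρ : ∀ i : Fin h, Equiv.Perm (Fin (l' i + l'' i)),
                Phi η τ d f g k x u (fun i =>
                  (finCongr (Nat.add_assoc (l i) (l' i) (l'' i)).symm).permCongr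
                    (σ i * permR (ρ i)))) := by
        simp only [starMul, Function.comp_apply]
        congr 1
        refine Finset.sum_congr rfl fun σ _ => ?_
        exact aux_rearr _ _ _ _ _ (fun ρ => key σ ρ)
    _ = (∏ i : Fin h, (((l i).factorial : ℂ) * ((l' i + l'' i).factorial : ℂ)))⁻¹ *
          ((∏ i : Fin h, (((l' i).factorial : ℂ) * ((l'' i).factorial : ℂ)))⁻¹ *
            ∑ ρ : ∀ i : Fin h, Equiv.Perm (Fin (l' i + l'' i)),
              ∑ σ : ∀ i : Fin h, Equiv.Perm (Fin (l i + (l' i + l'' i))),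
                Phi η τ d f g k x u (fun i =>
                  (finCongr (Nat.add_assoc (l i) (l' i) (l'' i)).symm).permCongr
                    (σ i * permR (ρ i)))) := by
        rw [← Finset.mul_sum, Finset.sum_comm]
    _ = (∏ i : Fin h, (((l i).factorial : ℂ) * ((l' i + l'' i).factorial : ℂ)))⁻¹ *
          ((∏ i : Fin h, (((l' i).factorial : ℂ) * ((l'' i).factorial : ℂ)))⁻¹ *
            ∑ ρ : ∀ i : Fin h, Equiv.Perm (Fin (l' i + l'' i)),
              ∑ σ : ∀ i : Fin h, Equiv.Perm (Fin (l i + l' i + l'' i)),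
                Phi η τ d f g k x u σ) := by
        congr 1; congr 1
        refine Finset.sum_congr rfl fun ρ _ => ?_
        exact Fintype.sum_equiv
          (Equiv.piCongrRight fun i => (Equiv.mulRight (permR (ρ i))).trans
            ((finCongr (Nat.add_assoc (l i) (l' i) (l'' i)).symm).permCongr))
          (fun σ => Phi η τ d f g k x u (fun i =>
            (finCongr (Nat.add_assoc (l i) (l' i) (l'' i)).symm).permCongr
              (σ i * permR (ρ i))))
          (fun σ => Phi η τ d f g k x u σ) (fun σ => rfl)
    _ = (∏ i : Fin h, (((l i).factorial : ℂ) * ((l' i + l'' i).factorial : ℂ)))⁻¹ *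
          ((∏ i : Fin h, (((l' i).factorial : ℂ) * ((l'' i).factorial : ℂ)))⁻¹ *
            ((∏ i : Fin h, ((l' i + l'' i).factorial : ℂ)) *
              ∑ σ : ∀ i : Fin h, Equiv.Perm (Fin (l i + l' i + l'' i)),
                Phi η τ d f g k x u σ)) := by
        rw [Finset.sum_const, Finset.card_univ, nsmul_eq_mul]
        congr 3
        simp [Fintype.card_pi, Fintype.card_perm, Fintype.card_fin]
    _ = (∏ i : Fin h, ((l i).factorial * (l' i).factorial * (l'' i).factorial : ℂ))⁻¹ *
          ∑ σ : ∀ i : Fin h, Equiv.Perm (Fin (l i + l' i + l'' i)),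
            Phi η τ d f g k x u σ := by
        have h1 : (∏ i : Fin h, (((l i).factorial : ℂ) * ((l' i + l'' i).factorial : ℂ))) ≠ 0 :=
          Finset.prod_ne_zero_iff.mpr fun i _ => mul_ne_zero
            (Nat.cast_ne_zero.2 (l i).factorial_ne_zero)
            (Nat.cast_ne_zero.2 (l' i + l'' i).factorial_ne_zero)
        have h2 : (∏ i : Fin h, (((l' i).factorial : ℂ) * ((l'' i).factorial : ℂ))) ≠ 0 :=
          Finset.prod_ne_zero_iff.mpr fun i _ => mul_ne_zero
            (Nat.cast_ne_zero.2 (l' i).factorial_ne_zero)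
            (Nat.cast_ne_zero.2 (l'' i).factorial_ne_zero)
        have h3 : (∏ i : Fin h, ((l i).factorial * (l' i).factorial * (l'' i).factorial : ℂ)) ≠ 0 :=
          Finset.prod_ne_zero_iff.mpr fun i _ => mul_ne_zero (mul_ne_zero
            (Nat.cast_ne_zero.2 (l i).factorial_ne_zero)
            (Nat.cast_ne_zero.2 (l' i).factorial_ne_zero))
            (Nat.cast_ne_zero.2 (l'' i).factorial_ne_zero)
        have hkey : (∏ i : Fin h, ((l i).factorial * (l' i).factorial * (l'' i).factorial : ℂ)) *
            (∏ i : Fin h, ((l' i + l'' i).factorial : ℂ)) =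
            (∏ i : Fin h, (((l i).factorial : ℂ) * ((l' i + l'' i).factorial : ℂ))) *
            (∏ i : Fin h, (((l' i).factorial : ℂ) * ((l'' i).factorial : ℂ))) := by
          rw [← Finset.prod_mul_distrib, ← Finset.prod_mul_distrib]
          exact Finset.prod_congr rfl fun i _ => by ring
        rw [← mul_assoc, ← mul_assoc]
        congr 1
        field_simp
        linear_combination hkey

/-- Proposition 1: the product `*` of formula (2) is associative, at every point where
`θ(x_{α,i} − x_{β,j}) ≠ 0` for all pairs of distinct variable slots. -/
theorem starMul_assoc {h : ℕ} (hh : 1 ≤ h) (η : ℂ) (hη : 0 < η.im) (τ : ℂ)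
    (d : Fin h → Fin h → ℂ) (hd : ∀ i j, d i j = d j i)
    (l l' l'' : Fin h → ℕ) (f : FF h l) (g : FF h l') (k : FF h l'')
    (hf : IsSymFF f) (hg : IsSymFF g) (hk : IsSymFF k)
    (x : ∀ i : Fin h, Fin (l i + l' i + l'' i) → ℂ) (u : Fin h → ℂ)
    (hx : ∀ (i j : Fin h) (a : Fin (l i + l' i + l'' i)) (b : Fin (l j + l' j + l'' j)),
      (⟨i, a⟩ : Σ i : Fin h, Fin (l i + l' i + l'' i)) ≠ ⟨j, b⟩ →
      theta η (x i a - x j b) ≠ 0) :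
    starMul η τ d (starMul η τ d f g) k x u =
    starMul η τ d f (starMul η τ d g k)
      (fun i => x i ∘ Fin.cast (Nat.add_assoc (l i) (l' i) (l'' i)).symm) u := by
  rw [lhs_eq η τ d f g k x u, rhs_eq η τ d f g k x u]
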